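/- arXiv:1404.1826 — 2 statements merged into one kernel-verified Lean document; each statement's English description precedes it below -/
import Mathlib

section
/- Let f = h + conj(g) ∈ Ľ_H^α. Then for all z ∈ Δ, |g'(z)| ≤ (α + |z|)(1 + |z|) / ((1 + α|z|)(1 - |z|)³). -/
/-!
Write `g' = ω h'` with `ω = g' / h'`, a holomorphic self-map of the disc with `|ω 0| = α`; the
Schwarz–Pick lemma gives `|ω z| ≤ (α + |z|) / (1 + α |z|)`. For the starlike `h`, write
`h z = z q z` and `h' = p q`. Starlikeness makes `h⁻¹ (t h)` a Schwarz self-map of the disc for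
`t ∈ [0, 1]`; differentiating `|h⁻¹ (t h z)|² ≤ |z|²` at `t = 1` gives `Re p ≥ 0`, hence
Carathéodory's bounds `|p z| ≤ (1 + r) / (1 - r)` and `|p z - 1| ≤ 2 r / (1 - r)`, `r = |z|`.
Since `z q' / q = p - 1`, the function `t ↦ |q (t z)|² (1 - t r)⁴` is nonincreasing on `[0, 1]`,
so `|q z| ≤ 1 / (1 - r)²` and `|h' z| = |p z| |q z| ≤ (1 + r) / (1 - r)³`.
-/

open Metric Set Filter Topology ComplexConjugate

lemma norm_one_sub_conj_mul_sq_sub_norm_sub_sq (a w : ℂ) :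
    ‖1 - conj a * w‖ ^ 2 - ‖w - a‖ ^ 2 = (1 - ‖a‖ ^ 2) * (1 - ‖w‖ ^ 2) := by
  simp only [← Complex.normSq_eq_norm_sq, Complex.normSq_apply, Complex.sub_re, Complex.sub_im,
    Complex.one_re, Complex.one_im, Complex.mul_re, Complex.mul_im, Complex.conj_re,
    Complex.conj_im]
  ring

lemma one_sub_conj_mul_ne_zero {a w : ℂ} (ha : ‖a‖ < 1) (hw : ‖w‖ ≤ 1) : 1 - conj a * w ≠ 0 := by
  refine sub_ne_zero.2 fun h ↦ ?_
  have : ‖conj a * w‖ < 1 := by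
    rw [norm_mul, Complex.norm_conj]
    nlinarith [norm_nonneg a, norm_nonneg w]
  simp [← h] at this

lemma norm_sub_le_norm_one_sub_conj_mul {a w : ℂ} (ha : ‖a‖ ≤ 1) (hw : ‖w‖ ≤ 1) :
    ‖w - a‖ ≤ ‖1 - conj a * w‖ := by
  have := norm_one_sub_conj_mul_sq_sub_norm_sub_sq a w
  have : 0 ≤ (1 - ‖a‖ ^ 2) * (1 - ‖w‖ ^ 2) := by
    apply mul_nonneg <;> nlinarith [norm_nonneg a, norm_nonneg w]
  exact pow_le_pow_iff_left₀ (norm_nonneg _) (norm_nonneg _) two_ne_zero |>.1 (by linarith)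

lemma norm_mul_one_add_le_of_norm_sub_le {a w : ℂ} {r : ℝ} (ha : ‖a‖ < 1) (hr0 : 0 ≤ r)
    (hr1 : r < 1) (h : ‖w - a‖ ≤ r * ‖1 - conj a * w‖) : ‖w‖ * (1 + ‖a‖ * r) ≤ ‖a‖ + r := by
  set A := ‖w‖
  set α := ‖a‖
  set R := (conj a * w).re
  have hR : R ≤ α * A := by
    calc R ≤ ‖conj a * w‖ := Complex.re_le_norm _
      _ = α * A := by rw [norm_mul, Complex.norm_conj]
  have hsub : ‖w - a‖ ^ 2 = A ^ 2 - 2 * R + α ^ 2 := by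
    simp only [A, α, R, ← Complex.normSq_eq_norm_sq, Complex.normSq_apply, Complex.sub_re,
      Complex.sub_im, Complex.mul_re, Complex.conj_re, Complex.conj_im]
    ring
  have hden : ‖1 - conj a * w‖ ^ 2 = 1 - 2 * R + α ^ 2 * A ^ 2 := by
    simp only [A, α, R, ← Complex.normSq_eq_norm_sq, Complex.normSq_apply, Complex.sub_re,
      Complex.sub_im, Complex.one_re, Complex.one_im, Complex.mul_re, Complex.mul_im,
      Complex.conj_re, Complex.conj_im]
    ring
  have hsq : A ^ 2 - 2 * R + α ^ 2 ≤ r ^ 2 * (1 - 2 * R + α ^ 2 * A ^ 2) := by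
    rw [← hsub, ← hden, ← mul_pow]
    exact pow_le_pow_left₀ (norm_nonneg _) h 2
  have hα0 : 0 ≤ α := norm_nonneg a
  have hA0 : 0 ≤ A := norm_nonneg w
  -- `hsq` factors as `((1 + α r) A - (α + r)) ((1 - α r) A + r - α) ≤ 0`
  have hprod : ((1 + α * r) * A - (α + r)) * ((1 - α * r) * A + (r - α)) ≤ 0 := by
    nlinarith [mul_nonneg (sub_nonneg.2 hR) (by nlinarith : (0 : ℝ) ≤ 1 - r ^ 2)]
  by_contra! hlt
  have hX : 0 < (1 + α * r) * A - (α + r) := by linarith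
  have hY : (1 - α * r) * A + (r - α) ≤ 0 := nonpos_of_mul_nonpos_right hprod hX
  nlinarith [mul_le_mul_of_nonneg_left hY (by positivity : (0 : ℝ) ≤ 1 + α * r),
    mul_lt_mul_of_pos_left hX (by nlinarith : (0 : ℝ) < 1 - α * r),
    mul_nonneg hr0 (by nlinarith : (0 : ℝ) ≤ 1 - α ^ 2)]

lemma norm_sub_le_mul_norm_one_sub_conj_mul {ω : ℂ → ℂ} (hω : DifferentiableOn ℂ ω (ball 0 1))
    (hlt : ∀ w ∈ ball (0 : ℂ) 1, ‖ω w‖ < 1) {z : ℂ} (hz : z ∈ ball (0 : ℂ) 1) :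
    ‖ω z - ω 0‖ ≤ ‖z‖ * ‖1 - conj (ω 0) * ω z‖ := by
  have ha := hlt 0 (mem_ball_self one_pos)
  have hden : ∀ w ∈ ball (0 : ℂ) 1, 1 - conj (ω 0) * ω w ≠ 0 :=
    fun w hw ↦ one_sub_conj_mul_ne_zero ha (hlt w hw).le
  have hF := Complex.norm_le_norm_of_mapsTo_ball
    (f := fun w ↦ (ω w - ω 0) / (1 - conj (ω 0) * ω w))
    ((hω.sub_const _).div ((differentiableOn_const _).sub ((differentiableOn_const _).mul hω)) hden)
    (fun w hw ↦ by
      rw [mem_closedBall_zero_iff, norm_div]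
      exact div_le_one_of_le₀ (norm_sub_le_norm_one_sub_conj_mul ha.le (hlt w hw).le)
        (norm_nonneg _))
    (by simp) (mem_ball_zero_iff.1 hz)
  rwa [norm_div, div_le_iff₀ (norm_pos_iff.2 (hden z hz))] at hF

lemma norm_mul_one_add_le_of_forall_norm_lt_one {ω : ℂ → ℂ}
    (hω : DifferentiableOn ℂ ω (ball 0 1)) (hlt : ∀ w ∈ ball (0 : ℂ) 1, ‖ω w‖ < 1) {z : ℂ}
    (hz : z ∈ ball (0 : ℂ) 1) : ‖ω z‖ * (1 + ‖ω 0‖ * ‖z‖) ≤ ‖ω 0‖ + ‖z‖ :=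
  norm_mul_one_add_le_of_norm_sub_le (hlt 0 (mem_ball_self one_pos)) (norm_nonneg z)
    (mem_ball_zero_iff.1 hz) (norm_sub_le_mul_norm_one_sub_conj_mul hω hlt hz)

lemma norm_sub_one_le_norm_add_one {w : ℂ} (hw : 0 ≤ w.re) : ‖w - 1‖ ≤ ‖w + 1‖ := by
  have : ‖w + 1‖ ^ 2 - ‖w - 1‖ ^ 2 = 4 * w.re := by
    simp only [← Complex.normSq_eq_norm_sq, Complex.normSq_apply, Complex.sub_re, Complex.sub_im,
      Complex.add_re, Complex.add_im, Complex.one_re, Complex.one_im]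
    ring
  exact pow_le_pow_iff_left₀ (norm_nonneg _) (norm_nonneg _) two_ne_zero |>.1 (by linarith)

section Caratheodory

variable {p : ℂ → ℂ} (hp : DifferentiableOn ℂ p (ball 0 1))
  (hre : ∀ w ∈ ball (0 : ℂ) 1, 0 ≤ (p w).re) (hp0 : p 0 = 1)
include hp hre hp0

lemma norm_sub_one_le_mul_norm_add_one_of_re_nonneg {z : ℂ} (hz : z ∈ ball (0 : ℂ) 1) :
    ‖p z - 1‖ ≤ ‖z‖ * ‖p z + 1‖ := by
  have hne : ∀ w ∈ ball (0 : ℂ) 1, p w + 1 ≠ 0 := fun w hw h0 ↦ by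
    have := congrArg Complex.re h0
    simp only [Complex.add_re, Complex.one_re, Complex.zero_re] at this
    linarith [hre w hw]
  have hF := Complex.norm_le_norm_of_mapsTo_ball (f := fun w ↦ (p w - 1) / (p w + 1))
    ((hp.sub_const 1).div (hp.add_const 1) hne)
    (fun w hw ↦ by
      rw [mem_closedBall_zero_iff, norm_div]
      exact div_le_one_of_le₀ (norm_sub_one_le_norm_add_one (hre w hw)) (norm_nonneg _))
    (by simp [hp0]) (mem_ball_zero_iff.1 hz)
  rwa [norm_div, div_le_iff₀ (norm_pos_iff.2 (hne z hz))] at hF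

lemma norm_mul_one_sub_le_one_add_of_re_nonneg {z : ℂ} (hz : z ∈ ball (0 : ℂ) 1) :
    ‖p z‖ * (1 - ‖z‖) ≤ 1 + ‖z‖ := by
  have := norm_sub_one_le_mul_norm_add_one_of_re_nonneg hp hre hp0 hz
  nlinarith [norm_sub_norm_le (p z) 1, norm_add_le (p z) 1, norm_one (α := ℂ), norm_nonneg z]

lemma norm_sub_one_mul_one_sub_le_of_re_nonneg {z : ℂ} (hz : z ∈ ball (0 : ℂ) 1) :
    ‖p z - 1‖ * (1 - ‖z‖) ≤ 2 * ‖z‖ := by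
  have := norm_sub_one_le_mul_norm_add_one_of_re_nonneg hp hre hp0 hz
  have : ‖p z + 1‖ ≤ ‖p z - 1‖ + 2 := by
    calc ‖p z + 1‖ = ‖(p z - 1) + 2‖ := by ring_nf
      _ ≤ ‖p z - 1‖ + 2 := by simpa using norm_add_le (p z - 1) 2
  nlinarith [norm_nonneg z]

end Caratheodory

lemma norm_mul_one_sub_sq_le_one_of_norm_mul_deriv_le {q : ℂ → ℂ}
    (hq : DifferentiableOn ℂ q (ball 0 1)) (hq0 : q 0 = 1)
    (hbound : ∀ w ∈ ball (0 : ℂ) 1, ‖w * deriv q w‖ * (1 - ‖w‖) ≤ 2 * ‖w‖ * ‖q w‖)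
    {z : ℂ} (hz : z ∈ ball (0 : ℂ) 1) : ‖q z‖ * (1 - ‖z‖) ^ 2 ≤ 1 := by
  set r := ‖z‖
  have hr : r < 1 := mem_ball_zero_iff.1 hz
  have hnorm : ∀ t ∈ Icc (0 : ℝ) 1, ‖t • z‖ = t * r := fun t ht ↦ by
    rw [norm_smul, Real.norm_of_nonneg ht.1]
  have hmem : ∀ t ∈ Icc (0 : ℝ) 1, t • z ∈ ball (0 : ℂ) 1 := fun t ht ↦ by
    rw [mem_ball_zero_iff, hnorm t ht]
    nlinarith [ht.2, norm_nonneg z]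
  set F : ℝ → ℝ := fun t ↦ ‖q (t • z)‖ ^ 2 * (1 - t * r) ^ 4
  set F' : ℝ → ℝ := fun t ↦ 2 * inner ℝ (q (t • z)) (deriv q (t • z) * z) * (1 - t * r) ^ 4
      + ‖q (t • z)‖ ^ 2 * (4 * (1 - t * r) ^ 3 * -r)
  have hF : ∀ t ∈ Ioo (0 : ℝ) 1, HasDerivAt F (F' t) t := fun t ht ↦ by
    have hqt : HasDerivAt (fun s : ℝ ↦ q (s • z)) (deriv q (t • z) * z) t :=
      (hq.differentiableAt (isOpen_ball.mem_nhds (hmem t (Ioo_subset_Icc_self ht)))).hasDerivAt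
        |>.comp t (by simpa using (hasDerivAt_id t).smul_const z)
    have hpoly : HasDerivAt (fun s : ℝ ↦ (1 - s * r) ^ 4) (4 * (1 - t * r) ^ 3 * -r) t := by
      simpa using ((hasDerivAt_id t).mul_const r).const_sub 1 |>.fun_pow 4
    exact hqt.norm_sq.mul hpoly
  have hF'_nonpos : ∀ t ∈ Ioo (0 : ℝ) 1, F' t ≤ 0 := fun t ht ↦ by
    have hs : 0 < 1 - t * r := by nlinarith [ht.2, norm_nonneg z]
    have hb := hbound _ (hmem t (Ioo_subset_Icc_self ht))
    rw [hnorm t (Ioo_subset_Icc_self ht), norm_mul, norm_smul, Real.norm_of_nonneg ht.1.le] at hb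
    have hd : ‖deriv q (t • z) * z‖ * (1 - t * r) ≤ 2 * r * ‖q (t • z)‖ := by
      rw [norm_mul, mul_comm ‖deriv q _‖]
      nlinarith [ht.1]
    have hinner := real_inner_le_norm (q (t • z)) (deriv q (t • z) * z)
    simp only [F']
    nlinarith [mul_le_mul_of_nonneg_left hd (norm_nonneg (q (t • z))), pow_pos hs 3,
      mul_le_mul_of_nonneg_right hinner (pow_pos hs 4).le, norm_nonneg (q (t • z))]
  have hcont : ContinuousOn F (Icc 0 1) := by
    refine ContinuousOn.mul ?_ (by fun_prop)
    exact (continuous_norm.comp_continuousOn (hq.continuousOn.comp (by fun_prop) hmem)).pow 2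
  have hanti : AntitoneOn F (Icc 0 1) := by
    refine antitoneOn_of_hasDerivWithinAt_nonpos (convex_Icc 0 1) hcont (fun t ht ↦ ?_)
      (fun t ht ↦ hF'_nonpos t (by simpa using ht))
    rw [interior_Icc] at ht ⊢
    exact (hF t ht).hasDerivWithinAt
  have h10 : F 1 ≤ F 0 :=
    hanti (left_mem_Icc.2 zero_le_one) (right_mem_Icc.2 zero_le_one) zero_le_one
  simp only [F, one_smul, one_mul, zero_smul, hq0, norm_one, zero_mul, sub_zero, one_pow] at h10
  rw [← pow_le_one_iff_of_nonneg (by positivity) two_ne_zero]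
  linarith

lemma HasStrictDerivAt.eventually_eq_localInverse {𝕜 : Type*} [NontriviallyNormedField 𝕜]
    [CompleteSpace 𝕜] {h : 𝕜 → 𝕜} {h' w₀ : 𝕜} {U : Set 𝕜} (hs : HasStrictDerivAt h h' w₀)
    (hne : h' ≠ 0) (hU : U ∈ 𝓝 w₀) (hinj : InjOn h U) :
    ∀ᶠ y in 𝓝 (h w₀), ∀ u ∈ U, h u = y → u = hs.localInverse h h' w₀ hne y := by
  have hG : Tendsto (hs.localInverse h h' w₀ hne) (𝓝 (h w₀)) (𝓝 w₀) :=
    (hs.hasStrictFDerivAt_equiv hne).localInverse_tendsto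
  filter_upwards [hs.eventually_right_inverse hne, hG hU] with y hy hyU u hu rfl
  exact hinj hu hyU hy.symm

lemma differentiableOn_of_injOn_comp {h φ ψ : ℂ → ℂ} {U V : Set ℂ} (hU : IsOpen U)
    (hh : DifferentiableOn ℂ h U) (hne : ∀ w ∈ U, deriv h w ≠ 0) (hinj : InjOn h U)
    (hV : IsOpen V) (hψ : DifferentiableOn ℂ ψ V) (hφ : MapsTo φ V U)
    (hcomp : ∀ x ∈ V, h (φ x) = ψ x) : DifferentiableOn ℂ φ V := by
  intro x hx
  have hs : HasStrictDerivAt h (deriv h (φ x)) (φ x) :=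
    (hh.analyticAt (hU.mem_nhds (hφ hx))).hasStrictDerivAt
  have hψx : Tendsto ψ (𝓝 x) (𝓝 (h (φ x))) := by
    rw [hcomp x hx]
    exact (hψ.differentiableAt (hV.mem_nhds hx)).continuousAt
  have heq : φ =ᶠ[𝓝 x] hs.localInverse h _ _ (hne _ (hφ hx)) ∘ ψ := by
    filter_upwards [hψx.eventually (hs.eventually_eq_localInverse (hne _ (hφ hx))
      (hU.mem_nhds (hφ hx)) hinj), hV.mem_nhds hx] with y hy hyV
    exact hy (φ y) (hφ hyV) (hcomp y hyV)
  refine (DifferentiableAt.congr_of_eventuallyEq ?_ heq).differentiableWithinAt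
  refine DifferentiableAt.comp x ?_ (hψ.differentiableAt (hV.mem_nhds hx))
  rw [← hcomp x hx]
  exact (hs.to_localInverse (hne _ (hφ hx))).hasDerivAt.differentiableAt

section Starlike

variable {h : ℂ → ℂ} (hd : DifferentiableOn ℂ h (ball 0 1)) (h0 : h 0 = 0)
  (hne : ∀ w ∈ ball (0 : ℂ) 1, deriv h w ≠ 0) (hinj : InjOn h (ball 0 1))
  (hstar : StarConvex ℝ 0 (h '' ball 0 1))
include hd h0 hne hinj hstar

lemma exists_norm_le_of_starConvex_image {t : ℝ} (ht : t ∈ Icc (0 : ℝ) 1) {z : ℂ}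
    (hz : z ∈ ball (0 : ℂ) 1) : ∃ u ∈ ball (0 : ℂ) 1, h u = t • h z ∧ ‖u‖ ≤ ‖z‖ := by
  have hex : ∀ w, ∃ u, w ∈ ball (0 : ℂ) 1 → u ∈ ball (0 : ℂ) 1 ∧ h u = t • h w := by
    intro w
    by_cases hw : w ∈ ball (0 : ℂ) 1
    · obtain ⟨u, hu, hu'⟩ := hstar.smul_mem (mem_image_of_mem h hw) ht.1 ht.2
      exact ⟨u, fun _ ↦ ⟨hu, hu'⟩⟩
    · exact ⟨0, fun hw' ↦ absurd hw' hw⟩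
  choose σ hσ using hex
  have h0mem : (0 : ℂ) ∈ ball (0 : ℂ) 1 := mem_ball_self one_pos
  have hσ0 : σ 0 = 0 := hinj (hσ 0 h0mem).1 h0mem (by rw [(hσ 0 h0mem).2, h0, smul_zero])
  have hσd : DifferentiableOn ℂ σ (ball 0 1) :=
    differentiableOn_of_injOn_comp isOpen_ball hd hne hinj isOpen_ball (hd.const_smul t)
      (fun w hw ↦ (hσ w hw).1) (fun w hw ↦ (hσ w hw).2)
  exact ⟨σ z, (hσ z hz).1, (hσ z hz).2, Complex.norm_le_norm_of_mapsTo_ball hσd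
    (fun w hw ↦ ball_subset_closedBall (hσ w hw).1) hσ0 (mem_ball_zero_iff.1 hz)⟩

lemma re_mul_deriv_div_nonneg_of_starConvex_image {z : ℂ} (hz : z ∈ ball (0 : ℂ) 1) :
    0 ≤ (z * deriv h z / h z).re := by
  have hs : HasStrictDerivAt h (deriv h z) z :=
    (hd.analyticAt (isOpen_ball.mem_nhds hz)).hasStrictDerivAt
  set G := hs.localInverse h _ _ (hne z hz)
  have hGz : G (h z) = z := (hs.hasStrictFDerivAt_equiv (hne z hz)).localInverse_apply_image
  have hray : HasDerivAt (fun t : ℝ ↦ t • h z) (h z) 1 := by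
    simpa using (hasDerivAt_id (1 : ℝ)).smul_const (h z)
  have hη : HasDerivAt (fun t : ℝ ↦ G (t • h z)) ((deriv h z)⁻¹ * h z) 1 :=
    (hs.to_localInverse (hne z hz)).hasDerivAt.comp_of_eq 1 hray (one_smul ℝ _).symm
  have hmax : IsLocalMaxOn (fun t : ℝ ↦ ‖G (t • h z)‖ ^ 2) (Icc 0 1) 1 := by
    have hray_t : Tendsto (fun t : ℝ ↦ t • h z) (𝓝[Icc 0 1] 1) (𝓝 (h z)) := by
      simpa using hray.continuousAt.tendsto.mono_left nhdsWithin_le_nhds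
    filter_upwards [hray_t.eventually (hs.eventually_eq_localInverse (hne z hz)
      (isOpen_ball.mem_nhds hz) hinj), self_mem_nhdsWithin] with t ht ht01
    obtain ⟨u, hu, hut, hle⟩ := exists_norm_le_of_starConvex_image hd h0 hne hinj hstar ht01 hz
    simp only [one_smul, hGz]
    rw [show G (t • h z) = u from (ht u hu hut).symm]
    gcongr
  have hmono := hmax.hasFDerivWithinAt_nonpos hη.norm_sq.hasFDerivAt.hasFDerivWithinAt
    (y := -1) (mem_posTangentConeAt_of_segment_subset ((convex_Icc 0 1).segment_subset
      (right_mem_Icc.2 zero_le_one) (by norm_num)))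
  simp only [ContinuousLinearMap.toSpanSingleton_apply, one_smul, hGz, smul_eq_mul] at hmono
  have hinner : 0 ≤ inner ℝ ((deriv h z)⁻¹ * h z) z := by rw [real_inner_comm]; linarith
  rw [show z * deriv h z / h z = z * ((deriv h z)⁻¹ * h z)⁻¹ by rw [mul_inv, inv_inv]; ring,
    Complex.inv_def, ← mul_assoc, Complex.re_mul_ofReal, ← Complex.inner]
  exact mul_nonneg hinner (inv_nonneg.2 (Complex.normSq_nonneg _))

lemma norm_deriv_mul_one_sub_pow_three_le_of_starConvex_image (h1 : deriv h 0 = 1) {z : ℂ}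
    (hz : z ∈ ball (0 : ℂ) 1) : ‖deriv h z‖ * (1 - ‖z‖) ^ 3 ≤ 1 + ‖z‖ := by
  have h0mem : (0 : ℂ) ∈ ball (0 : ℂ) 1 := mem_ball_self one_pos
  set q := dslope h 0
  have hq : DifferentiableOn ℂ q (ball 0 1) :=
    (Complex.differentiableOn_dslope (isOpen_ball.mem_nhds h0mem)).2 hd
  have hq0 : q 0 = 1 := by simp only [q, dslope_same, h1]
  have hhq : ∀ w, h w = w * q w := fun w ↦ by
    simpa [h0] using (sub_smul_dslope h 0 w).symm
  have hqne : ∀ w ∈ ball (0 : ℂ) 1, q w ≠ 0 := fun w hw hqw ↦ by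
    rcases eq_or_ne w 0 with rfl | hw0
    · exact one_ne_zero (hq0 ▸ hqw)
    · exact hw0 (hinj hw h0mem (by rw [hhq, hqw, mul_zero, h0]))
  set p := fun w ↦ deriv h w / q w
  have hp : DifferentiableOn ℂ p (ball 0 1) := (hd.deriv isOpen_ball).div hq hqne
  have hp0 : p 0 = 1 := by simp [p, hq0, h1]
  have hhpq : ∀ w ∈ ball (0 : ℂ) 1, deriv h w = p w * q w := fun w hw ↦
    (div_mul_cancel₀ _ (hqne w hw)).symm
  have hre : ∀ w ∈ ball (0 : ℂ) 1, 0 ≤ (p w).re := fun w hw ↦ by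
    rcases eq_or_ne w 0 with rfl | hw0
    · simp [hp0]
    · convert re_mul_deriv_div_nonneg_of_starConvex_image hd h0 hne hinj hstar hw using 2
      rw [hhq w, hhpq w hw]
      field_simp [hqne w hw, hw0]
  have hqderiv : ∀ w ∈ ball (0 : ℂ) 1, w * deriv q w = (p w - 1) * q w := fun w hw ↦ by
    have hmul :=
      (hasDerivAt_id' w).fun_mul (hq.differentiableAt (isOpen_ball.mem_nhds hw)).hasDerivAt
    rw [show (fun x ↦ x * q x) = h from funext fun x ↦ (hhq x).symm] at hmul
    rw [sub_mul, ← hhpq w hw, hmul.deriv, one_mul]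
    ring
  have hgrowth : ‖q z‖ * (1 - ‖z‖) ^ 2 ≤ 1 :=
    norm_mul_one_sub_sq_le_one_of_norm_mul_deriv_le hq hq0 (fun w hw ↦ by
      rw [hqderiv w hw, norm_mul]
      nlinarith [norm_sub_one_mul_one_sub_le_of_re_nonneg hp hre hp0 hw, norm_nonneg (q w)]) hz
  calc ‖deriv h z‖ * (1 - ‖z‖) ^ 3 = (‖p z‖ * (1 - ‖z‖)) * (‖q z‖ * (1 - ‖z‖) ^ 2) := by
        rw [hhpq z hz, norm_mul]; ring
    _ ≤ (1 + ‖z‖) * 1 :=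
        mul_le_mul (norm_mul_one_sub_le_one_add_of_re_nonneg hp hre hp0 hz) hgrowth
          (by positivity) (by positivity)
    _ = 1 + ‖z‖ := mul_one _

end Starlike

theorem stmt8_general
    (h g : ℂ → ℂ) (α : ℝ)
    (hd : DifferentiableOn ℂ h (Metric.ball (0:ℂ) 1))
    (gd : DifferentiableOn ℂ g (Metric.ball (0:ℂ) 1))
    (h0 : h 0 = 0) (h1 : deriv h 0 = 1)
    (hb1 : ‖deriv g 0‖ = α)
    (hsp : ∀ z ∈ Metric.ball (0:ℂ) 1, ‖deriv g z‖ < ‖deriv h z‖)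
    (hinj : Set.InjOn h (Metric.ball (0:ℂ) 1))
    (hstar : ∀ w ∈ h '' (Metric.ball (0:ℂ) 1), segment ℝ 0 w ⊆ h '' (Metric.ball (0:ℂ) 1))
 :
    ∀ z ∈ Metric.ball (0:ℂ) 1,
      ‖deriv g z‖
        ≤ (α + ‖z‖) * (1 + ‖z‖) / ((1 + α * ‖z‖) * (1 - ‖z‖) ^ 3) := by
  intro z hz
  have hne : ∀ w ∈ ball (0 : ℂ) 1, deriv h w ≠ 0 := fun w hw hw0 ↦
    (norm_nonneg _).not_gt (by simpa [hw0] using hsp w hw)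
  set ω := fun w ↦ deriv g w / deriv h w
  have hω : DifferentiableOn ℂ ω (ball 0 1) :=
    (gd.deriv isOpen_ball).div (hd.deriv isOpen_ball) hne
  have hlt : ∀ w ∈ ball (0 : ℂ) 1, ‖ω w‖ < 1 := fun w hw ↦ by
    rw [norm_div, div_lt_one (norm_pos_iff.2 (hne w hw))]
    exact hsp w hw
  have hω0 : ‖ω 0‖ = α := by simp [ω, h1, hb1]
  have hpick := norm_mul_one_add_le_of_forall_norm_lt_one hω hlt hz
  have hdist := norm_deriv_mul_one_sub_pow_three_le_of_starConvex_image hd h0 hne hinj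
    (starConvex_iff_segment_subset.2 fun w hw ↦ hstar w hw) h1 hz
  have hα : 0 ≤ α := hb1 ▸ norm_nonneg _
  have hr : 0 < 1 - ‖z‖ := sub_pos.2 (mem_ball_zero_iff.1 hz)
  have hgz : ‖deriv g z‖ = ‖ω z‖ * ‖deriv h z‖ := by
    rw [norm_div, div_mul_cancel₀ _ (norm_ne_zero_iff.2 (hne z hz))]
  rw [hω0] at hpick
  rw [le_div_iff₀ (by positivity), hgz]
  calc ‖ω z‖ * ‖deriv h z‖ * ((1 + α * ‖z‖) * (1 - ‖z‖) ^ 3)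
      = (‖ω z‖ * (1 + α * ‖z‖)) * (‖deriv h z‖ * (1 - ‖z‖) ^ 3) := by ring
    _ ≤ (α + ‖z‖) * (1 + ‖z‖) := mul_le_mul hpick hdist (by positivity) (by positivity)

theorem stmt8
    (h g : ℂ → ℂ) (α : ℝ) (hα : α ∈ Set.Ico (0:ℝ) 1)
    (hd : DifferentiableOn ℂ h (Metric.ball (0:ℂ) 1))
    (gd : DifferentiableOn ℂ g (Metric.ball (0:ℂ) 1))
    (h0 : h 0 = 0) (h1 : deriv h 0 = 1) (g0 : g 0 = 0)
    (hb1 : ‖deriv g 0‖ = α)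
    (hsp : ∀ z ∈ Metric.ball (0:ℂ) 1, ‖deriv g z‖ < ‖deriv h z‖)
    (hinj : Set.InjOn h (Metric.ball (0:ℂ) 1))
    (hstar : ∀ w ∈ h '' (Metric.ball (0:ℂ) 1), segment ℝ 0 w ⊆ h '' (Metric.ball (0:ℂ) 1))
 :
    ∀ z ∈ Metric.ball (0:ℂ) 1,
      ‖deriv g z‖
        ≤ (α + ‖z‖) * (1 + ‖z‖) / ((1 + α * ‖z‖) * (1 - ‖z‖) ^ 3) :=
  stmt8_general h g α hd gd h0 h1 hb1 hsp hinj hstar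
end

section
/- Let f = h + conj(g) ∈ Ľ_H^α. Then for all z ∈ Δ, |f(z)| = |h(z) + conj(g(z))| ≥ (1 - α)|z|(1 - |z|) / ((1 + α|z|)(1 + |z|)²). -/
/-!
Write `h = z q` and `g = z q_g` with `q = dslope h 0`, `q_g = dslope g 0`, so that
`‖h + ḡ‖ ≥ ‖z‖ (‖q‖ - ‖q_g‖)`.

Since `h` is starlike, `p = 1 + z q' / q = z h' / h` has `Re p ≥ 0` and `p 0 = 1`, so the Schwarz
lemma applied to `(p - 1) / (p + 1)` gives `Re p ≥ (1 - r) / (1 + r)` on `‖z‖ = r`; integrating this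
along the radius gives `‖q z‖ ≥ 1 / (1 + r)²`.

On the starlike image of `h`, the map `g ∘ h⁻¹` is `1`-Lipschitz along segments from `0` because
`‖g'‖ ≤ ‖h'‖`, hence `‖g‖ ≤ ‖h‖`. So `φ = q_g / q` maps the disc into the closed disc with
`φ 0 = g'(0)`, and the Schwarz–Pick lemma gives `‖φ z‖ ≤ (α + r) / (1 + α r)`.
-/

open Metric Set Filter Function
open scoped ComplexConjugate

theorem self_mul_dslope_zero {𝕜 : Type*} [NontriviallyNormedField 𝕜] {f : 𝕜 → 𝕜} (hf : f 0 = 0)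
    (z : 𝕜) : z * dslope f 0 z = f z := by
  simpa [hf] using sub_smul_dslope f 0 z

theorem dslope_ne_zero_of_injOn {𝕜 : Type*} [NontriviallyNormedField 𝕜] {f : 𝕜 → 𝕜} {s : Set 𝕜}
    (hinj : InjOn f s) {a x : 𝕜} (ha : a ∈ s) (hx : x ∈ s) (hf' : deriv f a ≠ 0) :
    dslope f a x ≠ 0 := by
  rcases eq_or_ne x a with rfl | hxa
  · rwa [dslope_same]
  · rw [dslope_of_ne _ hxa, slope_def_field]
    exact div_ne_zero (sub_ne_zero.2 fun h => hxa (hinj hx ha h)) (sub_ne_zero.2 hxa)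

theorem HasDerivAt.comp_ofReal_mul {f : ℂ → ℂ} {f' z : ℂ} {t : ℝ} (hf : HasDerivAt f f' (t * z)) :
    HasDerivAt (fun s : ℝ => f (s * z)) (f' * z) t :=
  (hf.comp (t : ℂ) (hasDerivAt_mul_const z)).comp_ofReal

theorem HasDerivAt.log_norm {u : ℝ → ℂ} {u' : ℂ} {t : ℝ} (hu : HasDerivAt u u' t) (h0 : u t ≠ 0) :
    HasDerivAt (fun s => Real.log ‖u s‖) (u' / u t).re t := by
  have hsq := (hu.norm_sq.log (pow_ne_zero 2 (norm_ne_zero_iff.2 h0))).div_const 2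
  have hlog : (fun s => Real.log (‖u s‖ ^ 2) / 2) = fun s => Real.log ‖u s‖ := by
    funext s
    rw [Real.log_pow]
    ring
  rw [hlog] at hsq
  refine hsq.congr_deriv ?_
  rw [Complex.inner, Complex.div_re, Complex.sq_norm, Complex.normSq_apply]
  simp only [Complex.mul_re, Complex.conj_re, Complex.conj_im]
  field_simp
  ring

namespace Complex

noncomputable def moebius (a w : ℂ) : ℂ := (a - w) / (1 - conj a * w)

theorem normSq_one_sub_conj_mul_sub_normSq_sub (a w : ℂ) :
    normSq (1 - conj a * w) - normSq (a - w) = (1 - normSq a) * (1 - normSq w) := by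
  simp only [normSq_apply, sub_re, sub_im, one_re, one_im, mul_re, mul_im, conj_re, conj_im]
  ring

theorem one_sub_conj_mul_ne_zero {a w : ℂ} (ha : ‖a‖ < 1) (hw : ‖w‖ ≤ 1) :
    1 - conj a * w ≠ 0 := by
  intro h
  have h1 := congrArg norm (sub_eq_zero.1 h)
  rw [norm_one, norm_mul, norm_conj] at h1
  nlinarith [norm_nonneg a, norm_nonneg w]

theorem moebius_self (a : ℂ) : moebius a a = 0 := by
  simp [moebius]

theorem moebius_moebius {a w : ℂ} (ha : ‖a‖ < 1) (hw : ‖w‖ ≤ 1) :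
    moebius a (moebius a w) = w := by
  have hD := one_sub_conj_mul_ne_zero ha hw
  have ha' := one_sub_conj_mul_ne_zero ha ha.le
  have hnum : a - (a - w) / (1 - conj a * w) = w * (1 - conj a * a) / (1 - conj a * w) := by
    rw [eq_div_iff hD, sub_mul, div_mul_cancel₀ _ hD]
    ring
  have hden : 1 - conj a * ((a - w) / (1 - conj a * w)) = (1 - conj a * a) / (1 - conj a * w) := by
    rw [eq_div_iff hD, sub_mul, one_mul, mul_assoc, div_mul_cancel₀ _ hD]
    ring
  rw [moebius, moebius, hnum, hden, div_div_div_cancel_right₀ hD, mul_div_assoc, div_self ha',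
    mul_one]

theorem norm_moebius_le {a w : ℂ} {r : ℝ} (ha : ‖a‖ < 1) (hw : ‖w‖ ≤ r) (hr : r ≤ 1) :
    ‖moebius a w‖ ≤ (‖a‖ + r) / (1 + ‖a‖ * r) := by
  have hD := one_sub_conj_mul_ne_zero ha (hw.trans hr)
  have hs : 0 ≤ ‖a‖ := norm_nonneg a
  have hr0 : 0 ≤ r := (norm_nonneg w).trans hw
  have hden : ‖1 - conj a * w‖ ≤ 1 + ‖a‖ * r := calc
    _ ≤ ‖(1 : ℂ)‖ + ‖conj a * w‖ := norm_sub_le _ _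
    _ ≤ 1 + ‖a‖ * r := by rw [norm_one, norm_mul, norm_conj]; gcongr
  have hid := normSq_one_sub_conj_mul_sub_normSq_sub a w
  simp only [← Complex.sq_norm] at hid
  have key : ‖1 - conj a * w‖ ^ 2 * (1 - r ^ 2) ≤ (1 + ‖a‖ * r) ^ 2 * (1 - ‖w‖ ^ 2) := by
    gcongr
    nlinarith
  rw [moebius, norm_div, div_le_div_iff₀ (norm_pos_iff.2 hD) (by positivity),
    ← pow_le_pow_iff_left₀ (by positivity) (by positivity) two_ne_zero]
  nlinarith [mul_le_mul_of_nonneg_left key (by nlinarith : 0 ≤ 1 - ‖a‖ ^ 2)]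

theorem norm_moebius_le_one {a w : ℂ} (ha : ‖a‖ < 1) (hw : ‖w‖ ≤ 1) : ‖moebius a w‖ ≤ 1 := by
  have h := norm_moebius_le ha hw le_rfl
  rwa [mul_one, add_comm 1, div_self (by positivity)] at h

theorem norm_le_of_mapsTo_closedBall {f : ℂ → ℂ} (hf : DifferentiableOn ℂ f (ball 0 1))
    (hmaps : MapsTo f (ball 0 1) (closedBall 0 1)) (h0 : ‖f 0‖ < 1) {z : ℂ}
    (hz : z ∈ ball (0 : ℂ) 1) : ‖f z‖ ≤ (‖f 0‖ + ‖z‖) / (1 + ‖f 0‖ * ‖z‖) := by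
  have hf1 : ∀ x ∈ ball (0 : ℂ) 1, ‖f x‖ ≤ 1 := fun x hx => mem_closedBall_zero_iff.1 (hmaps hx)
  have hψ : DifferentiableOn ℂ (fun x => moebius (f 0) (f x)) (ball 0 1) :=
    ((differentiableOn_const _).sub hf).div ((differentiableOn_const _).sub
      ((differentiableOn_const _).mul hf)) fun x hx => one_sub_conj_mul_ne_zero h0 (hf1 x hx)
  have hschwarz : ‖moebius (f 0) (f z)‖ ≤ ‖z‖ :=
    norm_le_norm_of_mapsTo_ball hψ
      (fun x hx => mem_closedBall_zero_iff.2 (norm_moebius_le_one h0 (hf1 x hx)))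
      (moebius_self _) (mem_ball_zero_iff.1 hz)
  rw [← moebius_moebius h0 (hf1 z hz)]
  exact norm_moebius_le h0 hschwarz (mem_ball_zero_iff.1 hz).le

theorem div_le_re_one_add_div_one_sub {o : ℂ} {r : ℝ} (ho : ‖o‖ ≤ r) (hr : r < 1) :
    (1 - r) / (1 + r) ≤ ((1 + o) / (1 - o)).re := by
  have ho1 : 1 - o ≠ 0 := fun h => by
    have := congrArg norm (sub_eq_zero.1 h)
    rw [norm_one] at this
    linarith
  have hre : ((1 + o) / (1 - o)).re = (1 - ‖o‖ ^ 2) / ‖1 - o‖ ^ 2 := by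
    rw [div_re, ← add_div, Complex.sq_norm, Complex.sq_norm]
    congr 1
    simp only [normSq_apply, add_re, add_im, sub_re, sub_im, one_re, one_im]
    ring
  have hden : ‖1 - o‖ ≤ 1 + ‖o‖ := (norm_sub_le _ _).trans_eq (by rw [norm_one])
  have ho0 := norm_nonneg o
  rw [hre, div_le_div_iff₀ (by linarith) (by positivity)]
  have := mul_le_mul_of_nonneg_left (pow_le_pow_left₀ (norm_nonneg _) hden 2)
    (by linarith : 0 ≤ 1 - r)
  nlinarith

theorem one_sub_norm_div_le_re_of_re_nonneg {p : ℂ → ℂ} (hp : DifferentiableOn ℂ p (ball 0 1))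
    (hp0 : p 0 = 1) (hre : ∀ z ∈ ball (0 : ℂ) 1, 0 ≤ (p z).re) {z : ℂ}
    (hz : z ∈ ball (0 : ℂ) 1) : (1 - ‖z‖) / (1 + ‖z‖) ≤ (p z).re := by
  have hp1 : ∀ x ∈ ball (0 : ℂ) 1, p x + 1 ≠ 0 := fun x hx h => by
    have := congrArg re h
    simp only [add_re, one_re, zero_re] at this
    linarith [hre x hx]
  set ω : ℂ → ℂ := fun x => (p x - 1) / (p x + 1)
  have hω : DifferentiableOn ℂ ω (ball 0 1) := (hp.sub_const 1).div (hp.add_const 1) hp1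
  have hmaps : MapsTo ω (ball 0 1) (closedBall 0 1) := by
    intro x hx
    rw [mem_closedBall_zero_iff, norm_div]
    refine div_le_one_of_le₀ ?_ (norm_nonneg _)
    rw [← sq_le_sq₀ (norm_nonneg _) (norm_nonneg _), Complex.sq_norm, Complex.sq_norm]
    simp only [normSq_apply, sub_re, add_re, sub_im, add_im, one_re, one_im]
    nlinarith [hre x hx]
  have hschwarz : ‖ω z‖ ≤ ‖z‖ :=
    norm_le_norm_of_mapsTo_ball hω hmaps (by simp [ω, hp0]) (mem_ball_zero_iff.1 hz)
  have hpz : p z = (1 + ω z) / (1 - ω z) := by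
    have := hp1 z hz
    simp only [ω]
    field_simp
    ring
  rw [hpz]
  exact div_le_re_one_add_div_one_sub hschwarz (mem_ball_zero_iff.1 hz)

-- `t ↦ log ‖q (t z)‖ + 2 log (1 + t ‖z‖)` is nondecreasing on `[0, 1]`.
theorem one_div_one_add_norm_sq_le_norm {q : ℂ → ℂ} (hq : DifferentiableOn ℂ q (ball 0 1))
    (hq0 : q 0 = 1) (hne : ∀ z ∈ ball (0 : ℂ) 1, q z ≠ 0)
    (hre : ∀ z ∈ ball (0 : ℂ) 1, (1 - ‖z‖) / (1 + ‖z‖) ≤ 1 + (z * deriv q z / q z).re)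
    {z : ℂ} (hz : z ∈ ball (0 : ℂ) 1) : 1 / (1 + ‖z‖) ^ 2 ≤ ‖q z‖ := by
  set r := ‖z‖
  have hr0 : 0 ≤ r := norm_nonneg z
  have hr1 : r < 1 := mem_ball_zero_iff.1 hz
  have hnorm : ∀ t : ℝ, 0 ≤ t → ‖(t : ℂ) * z‖ = t * r := fun t ht => by
    rw [norm_mul, norm_real, Real.norm_of_nonneg ht]
  have hmem : ∀ t ∈ Icc (0 : ℝ) 1, (t : ℂ) * z ∈ ball (0 : ℂ) 1 := fun t ht => by
    rw [mem_ball_zero_iff, hnorm t ht.1]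
    nlinarith [ht.1, ht.2]
  set F : ℝ → ℝ := fun t => Real.log ‖q (t * z)‖ + 2 * Real.log (1 + t * r)
  have hF : ∀ t ∈ Icc (0 : ℝ) 1,
      HasDerivAt F ((z * deriv q (t * z) / q (t * z)).re + 2 * (r / (1 + t * r))) t := by
    intro t ht
    have hlog := ((hq.differentiableAt (isOpen_ball.mem_nhds (hmem t ht))).hasDerivAt
      |>.comp_ofReal_mul).log_norm (hne _ (hmem t ht))
    have hlin := (((hasDerivAt_id' t).mul_const r).const_add 1).log (by nlinarith [ht.1])
    refine (hlog.add (hlin.const_mul 2)).congr_deriv ?_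
    rw [mul_comm z, one_mul]
  have hF' : ∀ t ∈ Ioo (0 : ℝ) 1,
      0 ≤ (z * deriv q (t * z) / q (t * z)).re + 2 * (r / (1 + t * r)) := by
    rintro t ⟨ht0, ht1⟩
    have h := hre _ (hmem t ⟨ht0.le, ht1.le⟩)
    rw [hnorm t ht0.le, mul_assoc, mul_div_assoc, re_ofReal_mul] at h
    have hpos : 0 < 1 + t * r := by positivity
    have hzero : (1 - t * r) / (1 + t * r) - 1 + t * (2 * (r / (1 + t * r))) = 0 := by
      field_simp
      ring
    rw [← mul_nonneg_iff_of_pos_left ht0]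
    linarith
  have hmono : MonotoneOn F (Icc 0 1) :=
    monotoneOn_of_hasDerivWithinAt_nonneg (convex_Icc 0 1)
      (fun t ht => (hF t ht).continuousAt.continuousWithinAt)
      (fun t ht => (hF t (interior_subset ht)).hasDerivWithinAt)
      (fun t ht => hF' t (by rwa [interior_Icc] at ht))
  have h01 := hmono (left_mem_Icc.2 zero_le_one) (right_mem_Icc.2 zero_le_one) zero_le_one
  simp only [F, ofReal_zero, ofReal_one, zero_mul, one_mul, hq0, norm_one, Real.log_one,
    add_zero, mul_zero] at h01
  have hlog : 0 ≤ Real.log (‖q z‖ * (1 + r) ^ 2) := by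
    rw [Real.log_mul (norm_ne_zero_iff.2 (hne z hz)) (by positivity), Real.log_pow]
    push_cast
    linarith
  rw [div_le_iff₀ (by positivity)]
  exact (Real.log_nonneg_iff (by have := norm_pos_iff.2 (hne z hz); positivity)).1 hlog

end Complex

theorem hasDerivAt_invFunOn_of_mem_image {h : ℂ → ℂ} {s : Set ℂ} (hs : IsOpen s)
    (hd : DifferentiableOn ℂ h s) (hinj : InjOn h s) (hne : ∀ x ∈ s, deriv h x ≠ 0) {w : ℂ}
    (hw : w ∈ h '' s) : HasDerivAt (invFunOn h s) (deriv h (invFunOn h s w))⁻¹ w := by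
  obtain ⟨x, hx, rfl⟩ := hw
  rw [hinj.leftInvOn_invFunOn hx]
  exact ((hd.analyticAt (hs.mem_nhds hx)).hasStrictDerivAt.to_local_left_inverse (hne x hx)
    (eventually_of_mem (hs.mem_nhds hx) fun y hy => hinj.leftInvOn_invFunOn hy)).hasDerivAt

-- Along the segment, `g ∘ h⁻¹` has derivative `g' / h'` of norm at most one.
theorem norm_sub_le_of_norm_deriv_le {h : ℂ → ℂ} {s : Set ℂ} (hs : IsOpen s)
    (hd : DifferentiableOn ℂ h s) (hinj : InjOn h s) (hne : ∀ x ∈ s, deriv h x ≠ 0) {g : ℂ → ℂ}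
    (hg : DifferentiableOn ℂ g s) (hgh : ∀ x ∈ s, ‖deriv g x‖ ≤ ‖deriv h x‖) {x y : ℂ}
    (hx : x ∈ s) (hy : y ∈ s)
    (hseg : segment ℝ (h x) (h y) ⊆ h '' s) : ‖g y - g x‖ ≤ ‖h y - h x‖ := by
  have hderiv : ∀ w ∈ segment ℝ (h x) (h y), HasDerivWithinAt (g ∘ invFunOn h s)
      (deriv g (invFunOn h s w) * (deriv h (invFunOn h s w))⁻¹) (segment ℝ (h x) (h y)) w := by
    intro w hw
    obtain ⟨v, hv, rfl⟩ := hseg hw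
    have hH := hasDerivAt_invFunOn_of_mem_image hs hd hinj hne (mem_image_of_mem h hv)
    rw [hinj.leftInvOn_invFunOn hv] at hH ⊢
    exact ((hg.differentiableAt (hs.mem_nhds hv)).hasDerivAt.comp_of_eq (h v) hH
      (hinj.leftInvOn_invFunOn hv).symm).hasDerivWithinAt
  have hbound : ∀ w ∈ segment ℝ (h x) (h y),
      ‖deriv g (invFunOn h s w) * (deriv h (invFunOn h s w))⁻¹‖ ≤ 1 := by
    intro w hw
    obtain ⟨v, hv, rfl⟩ := hseg hw
    rw [hinj.leftInvOn_invFunOn hv, norm_mul, norm_inv, ← div_eq_mul_inv]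
    exact div_le_one_of_le₀ (hgh v hv) (norm_nonneg _)
  simpa [hinj.leftInvOn_invFunOn hx, hinj.leftInvOn_invFunOn hy] using
    (convex_segment _ _).norm_image_sub_le_of_norm_hasDerivWithin_le hderiv hbound
      (left_mem_segment ℝ _ _) (right_mem_segment ℝ _ _)

namespace Starlike

variable {h : ℂ → ℂ} (hd : DifferentiableOn ℂ h (ball 0 1)) (hinj : InjOn h (ball 0 1))
  (hne : ∀ x ∈ ball (0 : ℂ) 1, deriv h x ≠ 0) (h0 : h 0 = 0)
  (hstar : StarConvex ℝ 0 (h '' ball 0 1))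
include hd hinj hne h0 hstar

theorem norm_invFunOn_ofReal_mul_le {x : ℂ} (hx : x ∈ ball (0 : ℂ) 1) {c : ℝ} (hc0 : 0 ≤ c)
    (hc1 : c ≤ 1) : ‖invFunOn h (ball 0 1) (c * h x)‖ ≤ ‖x‖ := by
  set H := invFunOn h (ball (0 : ℂ) 1)
  have hmem : ∀ y ∈ ball (0 : ℂ) 1, (c : ℂ) * h y ∈ h '' ball 0 1 := fun y hy => by
    simpa [Complex.real_smul] using hstar.smul_mem (mem_image_of_mem h hy) hc0 hc1
  have hχ : DifferentiableOn ℂ (fun y => H (c * h y)) (ball 0 1) := by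
    intro y hy
    have hH := hasDerivAt_invFunOn_of_mem_image isOpen_ball hd hinj hne (hmem y hy)
    have hch := (hd.differentiableAt (isOpen_ball.mem_nhds hy)).hasDerivAt.const_mul (c : ℂ)
    exact (hH.comp y hch).differentiableAt.differentiableWithinAt
  have hmaps : MapsTo (fun y => H (c * h y)) (ball 0 1) (closedBall 0 1) := fun y hy =>
    ball_subset_closedBall (invFunOn_mem (hmem y hy))
  have hχ0 : H (c * h 0) = 0 := by
    simpa [h0] using hinj.leftInvOn_invFunOn (mem_ball_self one_pos : (0 : ℂ) ∈ ball 0 1)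
  exact Complex.norm_le_norm_of_mapsTo_ball hχ hmaps hχ0 (mem_ball_zero_iff.1 hx)

/- `t ↦ ‖h⁻¹ (t h(x))‖²` is maximal on `[0, 1]` at `t = 1`, by the previous lemma, and its
derivative there is `2 Re (x̄ h(x) / h'(x))`. -/
theorem re_mul_deriv_div_nonneg {x : ℂ} (hx : x ∈ ball (0 : ℂ) 1) :
    0 ≤ (x * deriv h x / h x).re := by
  rcases eq_or_ne x 0 with rfl | hx0
  · simp
  have hhx : h x ≠ 0 := fun hx' => hx0 (hinj hx (mem_ball_self one_pos) (hx'.trans h0.symm))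
  have hHx : invFunOn h (ball 0 1) (h x) = x := hinj.leftInvOn_invFunOn hx
  have hγ : HasDerivAt (fun t : ℝ => invFunOn h (ball 0 1) (t * h x))
      ((deriv h x)⁻¹ * h x) 1 := by
    have hH := hasDerivAt_invFunOn_of_mem_image isOpen_ball hd hinj hne (mem_image_of_mem h hx)
    rw [hHx] at hH
    exact HasDerivAt.comp_ofReal_mul (by simpa using hH)
  have hmax : IsLocalMaxOn (fun t : ℝ => ‖invFunOn h (ball 0 1) (t * h x)‖ ^ 2) (Icc 0 1) 1 :=
    eventually_of_mem self_mem_nhdsWithin fun t ht => by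
      simp only [Complex.ofReal_one, one_mul, hHx]
      gcongr
      exact norm_invFunOn_ofReal_mul_le hd hinj hne h0 hstar hx ht.1 ht.2
  have hseg : segment ℝ (1 : ℝ) (1 + -1) ⊆ Icc 0 1 := by
    norm_num [segment_symm, segment_eq_Icc]
  have hinner : 0 ≤ ((deriv h x)⁻¹ * h x * conj x).re := by
    simpa [hHx, Complex.inner] using hmax.hasFDerivWithinAt_nonpos
      hγ.norm_sq.hasFDerivAt.hasFDerivWithinAt (mem_posTangentConeAt_of_segment_subset hseg)
  have hcx : conj x ≠ 0 := (map_ne_zero _).2 hx0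
  have key : x * deriv h x / h x
      = (Complex.normSq x : ℂ) * ((deriv h x)⁻¹ * h x * conj x)⁻¹ := by
    rw [← Complex.mul_conj]
    field_simp
  rw [key, Complex.re_ofReal_mul, Complex.inv_re]
  exact mul_nonneg (Complex.normSq_nonneg _) (div_nonneg hinner (Complex.normSq_nonneg _))

theorem one_div_one_add_norm_sq_le_norm_dslope (h1 : deriv h 0 = 1) {z : ℂ}
    (hz : z ∈ ball (0 : ℂ) 1) : 1 / (1 + ‖z‖) ^ 2 ≤ ‖dslope h 0 z‖ := by
  set q := dslope h 0
  have h0mem : (0 : ℂ) ∈ ball (0 : ℂ) 1 := mem_ball_self one_pos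
  have hq : DifferentiableOn ℂ q (ball 0 1) :=
    (Complex.differentiableOn_dslope (isOpen_ball.mem_nhds h0mem)).2 hd
  have hq0 : q 0 = 1 := by simp [q, dslope_same, h1]
  have hqne : ∀ x ∈ ball (0 : ℂ) 1, q x ≠ 0 := fun x hx =>
    dslope_ne_zero_of_injOn hinj h0mem hx (hne 0 h0mem)
  have hre : ∀ x ∈ ball (0 : ℂ) 1, 0 ≤ (1 + x * deriv q x / q x).re := by
    intro x hx
    rcases eq_or_ne x 0 with rfl | hx0
    · simp
    have hfac : h = fun y => y * q y := funext fun y => (self_mul_dslope_zero h0 y).symm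
    have hderiv : HasDerivAt (fun y => y * q y) (1 * q x + x * deriv q x) x :=
      (hasDerivAt_id' x).mul (hq.differentiableAt (isOpen_ball.mem_nhds hx)).hasDerivAt
    have hlog : 1 + x * deriv q x / q x = x * deriv h x / h x := by
      rw [hfac, hderiv.deriv]
      field_simp [hqne x hx]
    rw [hlog]
    exact re_mul_deriv_div_nonneg hd hinj hne h0 hstar hx
  have hp : DifferentiableOn ℂ (fun x => 1 + x * deriv q x / q x) (ball 0 1) :=
    (differentiableOn_const 1).add ((differentiableOn_id.mul (hq.deriv isOpen_ball)).div hq hqne)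
  refine Complex.one_div_one_add_norm_sq_le_norm hq hq0 hqne (fun x hx => ?_) hz
  simpa using Complex.one_sub_norm_div_le_re_of_re_nonneg hp (by simp) hre hx

theorem norm_dslope_le_norm_dslope {g : ℂ → ℂ} (hg : DifferentiableOn ℂ g (ball 0 1))
    (hgh : ∀ x ∈ ball (0 : ℂ) 1, ‖deriv g x‖ ≤ ‖deriv h x‖) {x : ℂ} (hx : x ∈ ball (0 : ℂ) 1) :
    ‖dslope g 0 x‖ ≤ ‖dslope h 0 x‖ := by
  rcases eq_or_ne x 0 with rfl | hx0
  · simpa [dslope_same] using hgh 0 hx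
  have hseg : segment ℝ (h 0) (h x) ⊆ h '' ball 0 1 := by
    rw [h0]
    exact starConvex_iff_segment_subset.1 hstar (mem_image_of_mem h hx)
  rw [dslope_of_ne _ hx0, dslope_of_ne _ hx0, slope_def_field, slope_def_field, norm_div,
    norm_div]
  gcongr
  exact norm_sub_le_of_norm_deriv_le isOpen_ball hd hinj hne hg hgh (mem_ball_self one_pos) hx hseg

theorem norm_dslope_le_mul_norm_dslope (h1 : deriv h 0 = 1) {g : ℂ → ℂ}
    (hg : DifferentiableOn ℂ g (ball 0 1)) (hgh : ∀ x ∈ ball (0 : ℂ) 1, ‖deriv g x‖ ≤ ‖deriv h x‖)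
    (hg1 : ‖deriv g 0‖ < 1) {z : ℂ} (hz : z ∈ ball (0 : ℂ) 1) :
    ‖dslope g 0 z‖ ≤ (‖deriv g 0‖ + ‖z‖) / (1 + ‖deriv g 0‖ * ‖z‖) * ‖dslope h 0 z‖ := by
  have h0mem : (0 : ℂ) ∈ ball (0 : ℂ) 1 := mem_ball_self one_pos
  have hqne : ∀ x ∈ ball (0 : ℂ) 1, dslope h 0 x ≠ 0 := fun x hx =>
    dslope_ne_zero_of_injOn hinj h0mem hx (hne 0 h0mem)
  have hφ : DifferentiableOn ℂ (fun x => dslope g 0 x / dslope h 0 x) (ball 0 1) :=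
    ((Complex.differentiableOn_dslope (isOpen_ball.mem_nhds h0mem)).2 hg).div
      ((Complex.differentiableOn_dslope (isOpen_ball.mem_nhds h0mem)).2 hd) hqne
  have hmaps : MapsTo (fun x => dslope g 0 x / dslope h 0 x) (ball 0 1) (closedBall 0 1) :=
    fun x hx => by
      rw [mem_closedBall_zero_iff, norm_div]
      exact div_le_one_of_le₀ (norm_dslope_le_norm_dslope hd hinj hne h0 hstar hg hgh hx)
        (norm_nonneg _)
  have hφ0 : dslope g 0 0 / dslope h 0 0 = deriv g 0 := by
    rw [dslope_same, dslope_same, h1, div_one]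
  have := Complex.norm_le_of_mapsTo_closedBall hφ hmaps (by rwa [hφ0]) hz
  rwa [hφ0, norm_div, div_le_iff₀ (norm_pos_iff.2 (hqne z hz))] at this

end Starlike

theorem div_le_mul_sub_of_le_of_le {α r A B : ℝ} (hα0 : 0 ≤ α) (hα1 : α < 1) (hr0 : 0 ≤ r)
    (hr1 : r < 1) (hA : 1 / (1 + r) ^ 2 ≤ A) (hB : B ≤ (α + r) / (1 + α * r) * A) :
    (1 - α) * r * (1 - r) / ((1 + α * r) * (1 + r) ^ 2) ≤ r * (A - B) := by
  have hpos : 0 < 1 + α * r := by positivity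
  have hc : 0 ≤ 1 - (α + r) / (1 + α * r) := by
    rw [sub_nonneg, div_le_one hpos]
    nlinarith [mul_nonneg (sub_nonneg.2 hα1.le) (sub_nonneg.2 hr1.le)]
  calc (1 - α) * r * (1 - r) / ((1 + α * r) * (1 + r) ^ 2)
      = r * (1 / (1 + r) ^ 2 * (1 - (α + r) / (1 + α * r))) := by
        field_simp
        ring
    _ ≤ r * (A * (1 - (α + r) / (1 + α * r))) := by gcongr
    _ ≤ r * (A - B) := by gcongr; linarith

theorem stmt17
    (h g : ℂ → ℂ) (α : ℝ) (hα : α ∈ Set.Ico (0:ℝ) 1)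
    (hd : DifferentiableOn ℂ h (Metric.ball (0:ℂ) 1))
    (gd : DifferentiableOn ℂ g (Metric.ball (0:ℂ) 1))
    (h0 : h 0 = 0) (h1 : deriv h 0 = 1) (g0 : g 0 = 0)
    (hb1 : ‖deriv g 0‖ = α)
    (hsp : ∀ z ∈ Metric.ball (0:ℂ) 1, ‖deriv g z‖ < ‖deriv h z‖)
    (hinj : Set.InjOn h (Metric.ball (0:ℂ) 1))
    (hstar : ∀ w ∈ h '' (Metric.ball (0:ℂ) 1), segment ℝ 0 w ⊆ h '' (Metric.ball (0:ℂ) 1))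
 :
    ∀ z ∈ Metric.ball (0:ℂ) 1,
      (1 - α) * ‖z‖ * (1 - ‖z‖) / ((1 + α * ‖z‖) * (1 + ‖z‖) ^ 2)
        ≤ ‖h z + (starRingEnd ℂ) (g z)‖ := by
  intro z hz
  obtain ⟨hα0, hα1⟩ := hα
  have hne : ∀ x ∈ ball (0 : ℂ) 1, deriv h x ≠ 0 := fun x hx =>
    norm_pos_iff.1 ((norm_nonneg _).trans_lt (hsp x hx))
  have hstar' : StarConvex ℝ 0 (h '' ball 0 1) := starConvex_iff_segment_subset.2 hstar
  have hq := Starlike.one_div_one_add_norm_sq_le_norm_dslope hd hinj hne h0 hstar' h1 hz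
  have hφ := Starlike.norm_dslope_le_mul_norm_dslope hd hinj hne h0 hstar' h1 gd
    (fun x hx => (hsp x hx).le) (hb1 ▸ hα1) hz
  rw [hb1] at hφ
  calc (1 - α) * ‖z‖ * (1 - ‖z‖) / ((1 + α * ‖z‖) * (1 + ‖z‖) ^ 2)
      ≤ ‖z‖ * (‖dslope h 0 z‖ - ‖dslope g 0 z‖) :=
        div_le_mul_sub_of_le_of_le hα0 hα1 (norm_nonneg z) (mem_ball_zero_iff.1 hz) hq hφ
    _ = ‖h z‖ - ‖g z‖ := by
        rw [← self_mul_dslope_zero h0 z, ← self_mul_dslope_zero g0 z, norm_mul, norm_mul]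
        ring
    _ ≤ ‖h z + conj (g z)‖ := by simpa using norm_sub_norm_le (h z) (-conj (g z))
end
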